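/- arXiv:2304.08581 — 2 statements merged into one kernel-verified Lean document; each statement's English description precedes it below -/
import Mathlib

section
/- Let A ∈ ℝ^{L×N}, B ∈ ℝ^{N×M}. Among all probability distributions {p_i}_{i=1}^N on the indices with p_i > 0, the variance E[‖AB − Y‖_F²] of the single-sample estimator Y = (1/p_j) A^{(j)} B_{(j)} is minimized by p_i = ‖A^{(i)}‖₂·‖B_{(i)}‖₂ / Σ_{l} ‖A^{(l)}‖₂·‖B_{(l)}‖₂. -/
open Matrix

/-- Among all probability distributions `{p_i}` with `p_i > 0`, the variance
`E[‖AB − Y‖_F²]` of the single-sample estimator `Y = (1/p_j) A^{(j)} B_{(j)}` is minimized by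
`p_i = ‖A^{(i)}‖₂‖B_{(i)}‖₂ / ∑_l ‖A^{(l)}‖₂‖B_{(l)}‖₂`. -/
theorem cr_sampling_probabilities_minimize_variance {L N M : ℕ}
    (A : Matrix (Fin L) (Fin N) ℝ) (B : Matrix (Fin N) (Fin M) ℝ)
    (hpos : ∀ i, 0 < Real.sqrt (∑ l, A l i ^ 2) * Real.sqrt (∑ m, B i m ^ 2))
    (Var : (Fin N → ℝ) → ℝ)
    (hVar : ∀ p, Var p = ∑ i, p i * ∑ l, ∑ m,
      ((A * B - (p i)⁻¹ • Matrix.vecMulVec (fun l => A l i) (fun m => B i m)) l m) ^ 2)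
    (pOpt : Fin N → ℝ)
    (hpOpt : ∀ i, pOpt i = Real.sqrt (∑ l, A l i ^ 2) * Real.sqrt (∑ m, B i m ^ 2) /
      ∑ k, Real.sqrt (∑ l, A l k ^ 2) * Real.sqrt (∑ m, B k m ^ 2))
    (q : Fin N → ℝ) (hq : ∀ i, 0 < q i) (hqsum : ∑ i, q i = 1) :
    Var pOpt ≤ Var q := by
  classical
  set c : Fin N → ℝ := fun i => Real.sqrt (∑ l, A l i ^ 2) * Real.sqrt (∑ m, B i m ^ 2) with hc
  set F : ℝ := ∑ l, ∑ m, ((A * B) l m) ^ 2 with hF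
  set S : ℝ := ∑ k, c k with hS
  have hcpos : ∀ i, 0 < c i := hpos
  have hcsq : ∀ i, c i ^ 2 = (∑ l, A l i ^ 2) * (∑ m, B i m ^ 2) := by
    intro i
    have h1 : (0:ℝ) ≤ ∑ l, A l i ^ 2 := Finset.sum_nonneg fun _ _ => sq_nonneg _
    have h2 : (0:ℝ) ≤ ∑ m, B i m ^ 2 := Finset.sum_nonneg fun _ _ => sq_nonneg _
    rw [hc, mul_pow, Real.sq_sqrt h1, Real.sq_sqrt h2]
  have hne : Nonempty (Fin N) := by
    by_contra h
    rw [not_nonempty_iff] at h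
    simp [Finset.univ_eq_empty] at hqsum
  have hSpos : 0 < S := Finset.sum_pos (fun i _ => hcpos i) Finset.univ_nonempty
  -- key formula
  have key : ∀ p : Fin N → ℝ, (∀ i, p i ≠ 0) →
      Var p = (∑ i, p i) * F - 2 * F + ∑ i, c i ^ 2 / p i := by
    intro p hp
    rw [hVar]
    have step : ∀ i : Fin N,
        p i * ∑ l, ∑ m, ((A * B - (p i)⁻¹ • Matrix.vecMulVec (fun l => A l i) (fun m => B i m)) l m) ^ 2
        = p i * F - 2 * (∑ l, ∑ m, (A * B) l m * (A l i * B i m)) + c i ^ 2 / p i := by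
      intro i
      have expand : ∀ l m,
          ((A * B - (p i)⁻¹ • Matrix.vecMulVec (fun l => A l i) (fun m => B i m)) l m) ^ 2
          = ((A * B) l m) ^ 2 - 2 * (p i)⁻¹ * ((A * B) l m * (A l i * B i m))
            + ((p i)⁻¹) ^ 2 * (A l i ^ 2 * B i m ^ 2) := by
        intro l m
        simp only [Matrix.sub_apply, Matrix.smul_apply, Matrix.vecMulVec_apply, smul_eq_mul]
        ring
      simp only [expand]
      have e2 : (∑ l, ∑ m, ((p i)⁻¹) ^ 2 * (A l i ^ 2 * B i m ^ 2))
          = ((p i)⁻¹) ^ 2 * ((∑ l, A l i ^ 2) * (∑ m, B i m ^ 2)) := by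
        rw [Finset.sum_mul_sum]
        simp only [Finset.mul_sum]
      have e1 : (∑ l, ∑ m, 2 * (p i)⁻¹ * ((A * B) l m * (A l i * B i m)))
          = 2 * (p i)⁻¹ * (∑ l, ∑ m, (A * B) l m * (A l i * B i m)) := by
        simp only [Finset.mul_sum]
      have sum1 : (∑ l, ∑ m, (((A * B) l m) ^ 2 - 2 * (p i)⁻¹ * ((A * B) l m * (A l i * B i m))
            + ((p i)⁻¹) ^ 2 * (A l i ^ 2 * B i m ^ 2)))
          = F - 2 * (p i)⁻¹ * (∑ l, ∑ m, (A * B) l m * (A l i * B i m))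
            + ((p i)⁻¹) ^ 2 * ((∑ l, A l i ^ 2) * (∑ m, B i m ^ 2)) := by
        rw [hF]
        simp only [Finset.sum_add_distrib, Finset.sum_sub_distrib]
        rw [e1, e2]
      rw [sum1, ← hcsq i]
      field_simp [hp i]
    have cross : (∑ i, ∑ l, ∑ m, (A * B) l m * (A l i * B i m)) = F := by
      rw [hF, Finset.sum_comm]
      refine Finset.sum_congr rfl fun l _ => ?_
      rw [Finset.sum_comm]
      refine Finset.sum_congr rfl fun m _ => ?_
      rw [← Finset.mul_sum, ← Matrix.mul_apply, sq]
    simp only [step]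
    rw [Finset.sum_add_distrib, Finset.sum_sub_distrib, ← Finset.sum_mul, ← Finset.mul_sum, cross]
  -- pOpt values
  have hpOpt' : ∀ i, pOpt i = c i / S := fun i => hpOpt i
  have hpOptne : ∀ i, pOpt i ≠ 0 := by
    intro i
    rw [hpOpt' i]
    exact ne_of_gt (div_pos (hcpos i) hSpos)
  have hpOptsum : ∑ i, pOpt i = 1 := by
    simp only [hpOpt']
    rw [← Finset.sum_div, ← hS, div_self (ne_of_gt hSpos)]
  have hVarOpt : Var pOpt = 1 * F - 2 * F + S ^ 2 := by
    rw [key pOpt hpOptne, hpOptsum]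
    congr 1
    have : ∀ i, c i ^ 2 / pOpt i = c i * S := by
      intro i
      have hci := (hcpos i).ne'
      have hs := hSpos.ne'
      rw [hpOpt' i]
      field_simp
    simp only [this]
    rw [← Finset.sum_mul, ← hS, sq]
  have hVarq : Var q = 1 * F - 2 * F + ∑ i, c i ^ 2 / q i := by
    rw [key q (fun i => ne_of_gt (hq i)), hqsum]
  rw [hVarOpt, hVarq]
  have cs : S ^ 2 ≤ ∑ i, c i ^ 2 / q i := by
    have h := Finset.sq_sum_div_le_sum_sq_div Finset.univ c (fun i _ => hq i)
    rwa [hqsum, ← hS, div_one] at h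
  linarith
end

section
/- With the optimal probabilities p_i = ‖A^{(i)}‖₂‖B_{(i)}‖₂ / Σ_l ‖A^{(l)}‖₂‖B_{(l)}‖₂ and r independent samples averaged, the CR estimator satisfies E[‖AB − CR‖_F²] ≤ (1/r)·‖A‖_F²·‖B‖_F². -/
open Matrix

private lemma sum_prod_eval {r N : ℕ} (h : Fin r → Fin N → ℝ) :
    ∑ f : Fin r → Fin N, ∏ k, h k (f k) = ∏ k, ∑ i, h k i :=
  (Fintype.prod_sum fun k i => h k i).symm

private lemma moment_pair {r N : ℕ} (p h : Fin N → ℝ) (hp1 : ∑ i, p i = 1)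
    (j j' : Fin r) :
    ∑ f : Fin r → Fin N, (∏ k, p (f k)) * (h (f j) * h (f j')) =
      if j = j' then ∑ i, p i * h i ^ 2 else (∑ i, p i * h i) ^ 2 := by
  have key : ∀ f : Fin r → Fin N, (∏ k, p (f k)) * (h (f j) * h (f j')) =
      ∏ k, (p (f k) * ((if k = j then h (f k) else 1) * (if k = j' then h (f k) else 1))) := by
    intro f
    rw [Finset.prod_mul_distrib, Finset.prod_mul_distrib,
      Finset.prod_ite_eq' Finset.univ j (fun k => h (f k)),
      Finset.prod_ite_eq' Finset.univ j' (fun k => h (f k))]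
    simp
  simp_rw [key]
  rw [sum_prod_eval (fun k i => p i * ((if k = j then h i else 1) * (if k = j' then h i else 1)))]
  rcases eq_or_ne j j' with rfl | hjj
  · have h2 : ∀ k : Fin r, (∑ i, p i * ((if k = j then h i else 1) * (if k = j then h i else 1)))
        = if k = j then ∑ i, p i * h i ^ 2 else 1 := by
      intro k
      split_ifs with hk
      · simp [pow_two]
      · simp [hp1]
    simp_rw [h2]
    rw [Finset.prod_ite_eq' Finset.univ j (fun _ => ∑ i, p i * h i ^ 2)]
    simp
  · have h2 : ∀ k : Fin r, (∑ i, p i * ((if k = j then h i else 1) * (if k = j' then h i else 1)))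
        = (if k = j then ∑ i, p i * h i else 1) * (if k = j' then ∑ i, p i * h i else 1) := by
      intro k
      split_ifs with hk hk'
      · exact absurd (hk ▸ hk') hjj
      · simp
      · simp [mul_comm]
      · simp [hp1]
    simp_rw [h2]
    rw [Finset.prod_mul_distrib,
      Finset.prod_ite_eq' Finset.univ j (fun _ => ∑ i, p i * h i),
      Finset.prod_ite_eq' Finset.univ j' (fun _ => ∑ i, p i * h i)]
    simp [hjj, pow_two]

private lemma expectation_sq_mean {r N : ℕ} (p h : Fin N → ℝ) (hp1 : ∑ i, p i = 1)
    (hmean : ∑ i, p i * h i = 0) :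
    ∑ f : Fin r → Fin N, (∏ k, p (f k)) * ((r:ℝ)⁻¹ * ∑ k, h (f k)) ^ 2 =
      (r:ℝ)⁻¹ ^ 2 * r * ∑ i, p i * h i ^ 2 := by
  have expand : ∀ f : Fin r → Fin N, (∏ k, p (f k)) * ((r:ℝ)⁻¹ * ∑ k, h (f k)) ^ 2 =
      (r:ℝ)⁻¹ ^ 2 * ∑ j, ∑ j', (∏ k, p (f k)) * (h (f j) * h (f j')) := by
    intro f
    rw [mul_pow, sq (∑ k, h (f k)), Finset.sum_mul_sum]
    simp_rw [← Finset.mul_sum]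
    ring
  calc ∑ f : Fin r → Fin N, (∏ k, p (f k)) * ((r:ℝ)⁻¹ * ∑ k, h (f k)) ^ 2
      = (r:ℝ)⁻¹ ^ 2 * ∑ f : Fin r → Fin N, ∑ j, ∑ j',
          (∏ k, p (f k)) * (h (f j) * h (f j')) := by
        simp_rw [expand]; rw [← Finset.mul_sum]
    _ = (r:ℝ)⁻¹ ^ 2 * ∑ j, ∑ j', ∑ f : Fin r → Fin N,
          (∏ k, p (f k)) * (h (f j) * h (f j')) := by
        rw [Finset.sum_comm]
        congr 1
        exact Finset.sum_congr rfl fun j _ => Finset.sum_comm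
    _ = (r:ℝ)⁻¹ ^ 2 * ∑ j : Fin r, ∑ j' : Fin r,
          (if j = j' then ∑ i, p i * h i ^ 2 else 0) := by
        simp_rw [moment_pair p h hp1, hmean]
        simp
    _ = (r:ℝ)⁻¹ ^ 2 * r * ∑ i, p i * h i ^ 2 := by
        simp_rw [Finset.sum_ite_eq Finset.univ]
        simp [mul_assoc]
private lemma opt_term (u v C : ℝ) (huv : 0 < u * v) (hC : 0 < C) :
    (u * v / C)⁻¹ * (u ^ 2 * v ^ 2) = C * (u * v) := by
  rw [inv_div]
  field_simp

set_option maxHeartbeats 1000000 in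
/-- With the optimal probabilities and `r` i.i.d. samples averaged, the `CR`
estimator satisfies `E[‖AB − CR‖_F²] ≤ (1/r)‖A‖_F²‖B‖_F²`. The expectation is over the
`r`-fold product distribution on index sequences `f : Fin r → Fin N`. -/
theorem cr_estimator_expected_error_bound {L N M : ℕ} (r : ℕ) (hr : 0 < r)
    (A : Matrix (Fin L) (Fin N) ℝ) (B : Matrix (Fin N) (Fin M) ℝ)
    (hpos : ∀ i, 0 < Real.sqrt (∑ l, A l i ^ 2) * Real.sqrt (∑ m, B i m ^ 2))
    (p : Fin N → ℝ)
    (hp : ∀ i, p i = Real.sqrt (∑ l, A l i ^ 2) * Real.sqrt (∑ m, B i m ^ 2) /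
      ∑ k, Real.sqrt (∑ l, A l k ^ 2) * Real.sqrt (∑ m, B k m ^ 2)) :
    ∑ f : Fin r → Fin N, (∏ k, p (f k)) *
        (∑ l, ∑ m,
          ((A * B - (r : ℝ)⁻¹ •
            ∑ k, (p (f k))⁻¹ • Matrix.vecMulVec (fun l => A l (f k)) (fun m => B (f k) m)) l m) ^ 2)
      ≤ (r : ℝ)⁻¹ * (∑ i, ∑ l, A l i ^ 2) * (∑ i, ∑ m, B i m ^ 2) := by

  have hrR : ((r : ℝ)) ≠ 0 := by exact_mod_cast hr.ne'
  rcases Nat.eq_zero_or_pos N with hN | hN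
  · subst hN
    haveI : Nonempty (Fin r) := Fin.pos_iff_nonempty.mp hr
    haveI : IsEmpty (Fin r → Fin 0) := inferInstance
    simp
  have hT : 0 < ∑ k, Real.sqrt (∑ l, A l k ^ 2) * Real.sqrt (∑ m, B k m ^ 2) :=
    Finset.sum_pos (fun i _ => hpos i) ⟨⟨0, hN⟩, Finset.mem_univ _⟩
  have hppos : ∀ i, 0 < p i := fun i => by
    rw [hp i]; exact div_pos (hpos i) hT
  have hp1 : ∑ i, p i = 1 := by
    simp_rw [hp]
    rw [← Finset.sum_div, div_self hT.ne']
  -- rewrite the matrix entry as an averaged sum of centered terms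
  have hent : ∀ (f : Fin r → Fin N) (l : Fin L) (m : Fin M),
      ((A * B - (r : ℝ)⁻¹ •
        ∑ k, (p (f k))⁻¹ • Matrix.vecMulVec (fun l => A l (f k)) (fun m => B (f k) m)) l m)
      = (r:ℝ)⁻¹ * ∑ k, ((∑ i, A l i * B i m) - (p (f k))⁻¹ * (A l (f k) * B (f k) m)) := by
    intro f l m
    simp only [Matrix.sub_apply, Matrix.smul_apply, Matrix.sum_apply, Matrix.vecMulVec_apply,
      smul_eq_mul, Matrix.mul_apply]
    rw [Finset.sum_sub_distrib, Finset.sum_const, Finset.card_univ, Fintype.card_fin,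
      nsmul_eq_mul, mul_sub, ← mul_assoc, inv_mul_cancel₀ hrR, one_mul]
  have hmean : ∀ (l : Fin L) (m : Fin M),
      ∑ i, p i * ((∑ i', A l i' * B i' m) - (p i)⁻¹ * (A l i * B i m)) = 0 := by
    intro l m
    have h1 : ∀ i, p i * ((∑ i', A l i' * B i' m) - (p i)⁻¹ * (A l i * B i m))
        = p i * (∑ i', A l i' * B i' m) - A l i * B i m := by
      intro i
      rw [mul_sub, ← mul_assoc, mul_inv_cancel₀ (hppos i).ne', one_mul]
    simp_rw [h1]
    rw [Finset.sum_sub_distrib, ← Finset.sum_mul, hp1, one_mul, sub_self]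
  -- step 1: compute the expectation exactly, entrywise
  have step1 : ∑ f : Fin r → Fin N, (∏ k, p (f k)) *
        (∑ l, ∑ m,
          ((A * B - (r : ℝ)⁻¹ •
            ∑ k, (p (f k))⁻¹ • Matrix.vecMulVec (fun l => A l (f k)) (fun m => B (f k) m)) l m) ^ 2)
      = ∑ l, ∑ m, (r:ℝ)⁻¹ ^ 2 * r *
          ∑ i, p i * ((∑ i', A l i' * B i' m) - (p i)⁻¹ * (A l i * B i m)) ^ 2 := by
    have e1 : ∀ f : Fin r → Fin N, (∏ k, p (f k)) *
        (∑ l, ∑ m,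
          ((A * B - (r : ℝ)⁻¹ •
            ∑ k, (p (f k))⁻¹ • Matrix.vecMulVec (fun l => A l (f k)) (fun m => B (f k) m)) l m) ^ 2)
        = ∑ l, ∑ m, (∏ k, p (f k)) *
            ((r:ℝ)⁻¹ * ∑ k, ((∑ i, A l i * B i m) - (p (f k))⁻¹ * (A l (f k) * B (f k) m))) ^ 2 := by
      intro f
      rw [Finset.mul_sum]
      refine Finset.sum_congr rfl fun l _ => ?_
      rw [Finset.mul_sum]
      refine Finset.sum_congr rfl fun m _ => ?_
      rw [hent f l m]
    rw [Finset.sum_congr rfl fun f _ => e1 f]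
    rw [Finset.sum_comm]
    refine Finset.sum_congr rfl fun l _ => ?_
    rw [Finset.sum_comm]
    refine Finset.sum_congr rfl fun m _ => ?_
    exact expectation_sq_mean p
      (fun i => (∑ i', A l i' * B i' m) - (p i)⁻¹ * (A l i * B i m)) hp1 (hmean l m)
  rw [step1]
  -- step 2: variance bound per entry
  have hvar : ∀ (l : Fin L) (m : Fin M),
      ∑ i, p i * ((∑ i', A l i' * B i' m) - (p i)⁻¹ * (A l i * B i m)) ^ 2
        ≤ ∑ i, (p i)⁻¹ * (A l i * B i m) ^ 2 := by
    intro l m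
    have hexp : ∀ i, p i * ((∑ i', A l i' * B i' m) - (p i)⁻¹ * (A l i * B i m)) ^ 2
        = p i * (∑ i', A l i' * B i' m) ^ 2
          - 2 * (∑ i', A l i' * B i' m) * (A l i * B i m)
          + (p i)⁻¹ * (A l i * B i m) ^ 2 := by
      intro i
      have hpi := (hppos i).ne'
      field_simp
      ring
    simp_rw [hexp]
    rw [Finset.sum_add_distrib, Finset.sum_sub_distrib, ← Finset.sum_mul, hp1, one_mul,
      ← Finset.mul_sum]
    nlinarith [sq_nonneg (∑ i', A l i' * B i' m)]
  have hconst : (0:ℝ) ≤ (r:ℝ)⁻¹ ^ 2 * r := by positivity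
  have hcs : (∑ k, Real.sqrt (∑ l, A l k ^ 2) * Real.sqrt (∑ m, B k m ^ 2)) ^ 2
      ≤ (∑ i, ∑ l, A l i ^ 2) * (∑ i, ∑ m, B i m ^ 2) := by
    refine Finset.sum_sq_le_sum_mul_sum_of_sq_eq_mul Finset.univ
      (fun i _ => by positivity) (fun i _ => by positivity) (fun i _ => ?_)
    rw [mul_pow, Real.sq_sqrt (by positivity), Real.sq_sqrt (by positivity)]
  calc ∑ l, ∑ m, (r:ℝ)⁻¹ ^ 2 * r *
          ∑ i, p i * ((∑ i', A l i' * B i' m) - (p i)⁻¹ * (A l i * B i m)) ^ 2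
      ≤ ∑ l, ∑ m, (r:ℝ)⁻¹ ^ 2 * r * ∑ i, (p i)⁻¹ * (A l i * B i m) ^ 2 := by
        refine Finset.sum_le_sum fun l _ => Finset.sum_le_sum fun m _ => ?_
        exact mul_le_mul_of_nonneg_left (hvar l m) hconst
    _ = (r:ℝ)⁻¹ * ∑ l, ∑ m, ∑ i, (p i)⁻¹ * (A l i * B i m) ^ 2 := by
        simp_rw [← Finset.mul_sum]
        congr 1
        rw [sq, mul_assoc, inv_mul_cancel₀ hrR, mul_one]
    _ = (r:ℝ)⁻¹ * ∑ i, (p i)⁻¹ * ((∑ l, A l i ^ 2) * (∑ m, B i m ^ 2)) := by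
        congr 1
        rw [Finset.sum_congr rfl fun l (_ : l ∈ Finset.univ) =>
          (Finset.sum_comm : ∑ m, ∑ i, (p i)⁻¹ * (A l i * B i m) ^ 2
            = ∑ i, ∑ m, (p i)⁻¹ * (A l i * B i m) ^ 2)]
        rw [Finset.sum_comm]
        refine Finset.sum_congr rfl fun i _ => ?_
        rw [Finset.sum_mul_sum, Finset.mul_sum]
        refine Finset.sum_congr rfl fun l _ => ?_
        rw [Finset.mul_sum]
        refine Finset.sum_congr rfl fun m _ => ?_
        rw [mul_pow]
    _ = (r:ℝ)⁻¹ * (∑ k, Real.sqrt (∑ l, A l k ^ 2) * Real.sqrt (∑ m, B k m ^ 2)) ^ 2 := by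
        congr 1
        have e3 : ∀ i : Fin N, (p i)⁻¹ * ((∑ l, A l i ^ 2) * (∑ m, B i m ^ 2))
            = (∑ k, Real.sqrt (∑ l, A l k ^ 2) * Real.sqrt (∑ m, B k m ^ 2)) *
              (Real.sqrt (∑ l, A l i ^ 2) * Real.sqrt (∑ m, B i m ^ 2)) := by
          intro i
          have h := opt_term (Real.sqrt (∑ l, A l i ^ 2)) (Real.sqrt (∑ m, B i m ^ 2))
            (∑ k, Real.sqrt (∑ l, A l k ^ 2) * Real.sqrt (∑ m, B k m ^ 2)) (hpos i) hT
          rw [Real.sq_sqrt (by positivity), Real.sq_sqrt (by positivity)] at h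
          rw [hp i]
          exact h
        rw [Finset.sum_congr rfl fun i _ => e3 i, ← Finset.mul_sum, sq]
    _ ≤ (r : ℝ)⁻¹ * (∑ i, ∑ l, A l i ^ 2) * (∑ i, ∑ m, B i m ^ 2) := by
        rw [mul_assoc]
        exact mul_le_mul_of_nonneg_left hcs (by positivity)
end
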